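/- arXiv:1703.02411 — 2 statements merged into one kernel-verified Lean document; each statement's English description precedes it below -/
import Mathlib

section
/- Consider the fragment graph whose vertices are the fragments of an MST forest and whose edges are the MWOEs of the fragments (each fragment contributes one edge to its MWOE). Then this fragment graph contains no cycle of length greater than 2; equivalently, orienting each fragment toward its MWOE, every connected component of the fragment graph contains exactly one pair of fragments whose MWOEs coincide. -/
variable {V : Type*}

/-- `T` is a spanning tree of `G`. -/
def IsSpanningTree (G T : SimpleGraph V) : Prop :=
  T ≤ G ∧ T.Connected ∧ T.IsAcyclic

/-- The total weight of the edges of `T`. -/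
noncomputable def treeWeight [Fintype V] [DecidableEq V] (w : Sym2 V → ℝ)
    (T : SimpleGraph V) : ℝ :=
  letI : DecidablePred (· ∈ T.edgeSet) := Classical.decPred _
  ∑ e ∈ Finset.univ.filter (· ∈ T.edgeSet), w e

/-- `T` is a minimum spanning tree of the weighted graph `(G, w)`. -/
def IsMST [Fintype V] [DecidableEq V] (G : SimpleGraph V) (w : Sym2 V → ℝ)
    (T : SimpleGraph V) : Prop :=
  IsSpanningTree G T ∧
    ∀ T' : SimpleGraph V, IsSpanningTree G T' → treeWeight w T ≤ treeWeight w T'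

/-- The edge `e` has one endpoint in `A` and the other endpoint in `B`. -/
def crossTo (A B : Set V) (e : Sym2 V) : Prop :=
  ∃ u v, e = s(u, v) ∧ u ∈ A ∧ v ∈ B

/-- `e` is the minimum-weight outgoing edge of the vertex set `S`: an edge of `G`
with exactly one endpoint in `S`, of minimum weight among all such edges. -/
def IsMWOE (G : SimpleGraph V) (w : Sym2 V → ℝ) (S : Set V) (e : Sym2 V) : Prop :=
  e ∈ G.edgeSet ∧ crossTo S Sᶜ e ∧ ∀ f ∈ G.edgeSet, crossTo S Sᶜ f → w e ≤ w f

/-- The nonempty vertex set `S` induces a connected subgraph of `T`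
(for a tree `T` this says that `S` spans a subtree of `T`). -/
def ConnectedIn (T : SimpleGraph V) (S : Set V) : Prop :=
  S.Nonempty ∧ ∀ u ∈ S, ∀ v ∈ S, ∃ p : T.Walk u v, ∀ x ∈ p.support, x ∈ S

/-- `P` is an MST forest (indexed family version): the vertex sets `P i` are
nonempty subtrees of the MST `T`, pairwise disjoint, and they cover `V`. -/
def IsMSTForestFam {ι : Type*} (T : SimpleGraph V) (P : ι → Set V) : Prop :=
  (∀ i, ConnectedIn T (P i)) ∧ Pairwise (Function.onFun Disjoint P) ∧
    (⋃ i, P i) = Set.univ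

/-- The edge `e` connects a vertex of fragment `i` to a vertex of fragment `j`. -/
def connectsFrag {ι : Type*} (P : ι → Set V) (e : Sym2 V) (i j : ι) : Prop :=
  ∃ u v, e = s(u, v) ∧ u ∈ P i ∧ v ∈ P j

/-- The fragment graph: fragments are adjacent when the MWOE of one of them
connects a vertex of one fragment to a vertex of the other. -/
def fragGraph {ι : Type*} (P : ι → Set V) (mwoe : ι → Sym2 V) : SimpleGraph ι :=
  SimpleGraph.fromRel (fun i j => connectsFrag P (mwoe i) i j ∨ connectsFrag P (mwoe j) j i)

/-- The fragment graph (vertices = fragments of an MST forest, edges = their MWOEs)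
contains no cycle of length greater than 2: as a simple graph it is acyclic, and
every connected component contains exactly one pair of distinct fragments whose
MWOEs coincide. -/
theorem stmt3 {ι : Type*} [Fintype V] [DecidableEq V] [Fintype ι]
    (G : SimpleGraph V) (w : Sym2 V → ℝ)
    (hconn : G.Connected) (hinj : Set.InjOn w G.edgeSet)
    (T : SimpleGraph V) (hT : IsMST G w T)
    (P : ι → Set V) (hforest : IsMSTForestFam T P)
    (mwoe : ι → Sym2 V) (hmwoe : ∀ i, IsMWOE G w (P i) (mwoe i)) :
    (fragGraph P mwoe).IsAcyclic ∧
      ∀ i : ι, ∃! pr : Sym2 ι, ∃ a b : ι, pr = s(a, b) ∧ a ≠ b ∧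
        (fragGraph P mwoe).Reachable i a ∧ mwoe a = mwoe b := by
  classical
  obtain ⟨hconnIn, hdisj, hcover⟩ := hforest
  have hdisj' : ∀ {i j : ι}, i ≠ j → ∀ {x : V}, x ∈ P i → x ∈ P j → False := by
    intro i j hij x hxi hxj
    exact Set.disjoint_left.mp (hdisj hij) hxi hxj
  -- construct the successor function σ
  have key : ∀ x : ι, ∃ (j : ι) (u v : V),
      j ≠ x ∧ mwoe x = s(u, v) ∧ u ∈ P x ∧ v ∈ P j := by
    intro x
    obtain ⟨hE, ⟨u, v, he, hu, hv⟩, _⟩ := hmwoe x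
    have hvmem : v ∈ ⋃ i, P i := by rw [hcover]; trivial
    obtain ⟨j, hj⟩ := Set.mem_iUnion.mp hvmem
    exact ⟨j, u, v, fun h => hv (h ▸ hj), he, hu, hj⟩
  choose σ U W hne hedge hU hW using key
  have huniq : ∀ x j, j ≠ x → connectsFrag P (mwoe x) x j → j = σ x := by
    rintro x j hj ⟨u, v, he, hu, hv⟩
    rw [hedge x] at he
    rcases Sym2.eq_iff.mp he with ⟨h1, h2⟩ | ⟨h1, h2⟩
    · by_contra hj2
      exact hdisj' hj2 hv (by rw [← h2]; exact hW x)
    · exact (hdisj' (hne x) (by rw [← h2]; exact hW x) hu).elim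
  have hadj : ∀ x, (fragGraph P mwoe).Adj x (σ x) := by
    intro x
    simp only [fragGraph, SimpleGraph.fromRel_adj]
    exact ⟨(hne x).symm, Or.inl (Or.inl ⟨U x, W x, hedge x, hU x, hW x⟩)⟩
  have hadj_cases : ∀ x y, (fragGraph P mwoe).Adj x y → y = σ x ∨ x = σ y := by
    intro x y hxy
    simp only [fragGraph, SimpleGraph.fromRel_adj] at hxy
    obtain ⟨hxyne, (h | h) | (h | h)⟩ := hxy
    · exact Or.inl (huniq x y (Ne.symm hxyne) h)
    · exact Or.inr (huniq y x hxyne h)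
    · exact Or.inr (huniq y x hxyne h)
    · exact Or.inl (huniq x y (Ne.symm hxyne) h)
  have hdec : ∀ x, w (mwoe (σ x)) ≤ w (mwoe x) := by
    intro x
    refine (hmwoe (σ x)).2.2 (mwoe x) (hmwoe x).1
      ⟨W x, U x, ?_, hW x, fun hUx => hdisj' (hne x) hUx (hU x)⟩
    rw [hedge x, Sym2.eq_swap]
  have hEeq : ∀ x, w (mwoe (σ x)) = w (mwoe x) → mwoe (σ x) = mwoe x :=
    fun x h => hinj (hmwoe (σ x)).1 (hmwoe x).1 h
  have hpair_succ : ∀ x y, mwoe y = mwoe x → y ≠ x → y = σ x := by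
    intro x y hE hyx
    have h2 : s(U y, W y) = s(U x, W x) := (hedge y).symm.trans (hE.trans (hedge x))
    rcases Sym2.eq_iff.mp h2 with ⟨h1, _⟩ | ⟨h1, _⟩
    · exact (hdisj' hyx (hU y) (by rw [h1]; exact hU x)).elim
    · by_contra hy2
      exact hdisj' hy2 (hU y) (by rw [h1]; exact hW x)
  -- `Pr a` : fragment `a` forms a mutual pair with `σ a`
  set Pr : ι → Prop := fun a => mwoe (σ a) = mwoe a with hPr
  have pair_invol : ∀ a, Pr a → σ (σ a) = a :=
    fun a h => (hpair_succ (σ a) a h.symm (hne a).symm).symm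
  have alternate : ∀ a, Pr a → ∀ k,
      (σ^[k] a = a ∧ σ^[k + 1] a = σ a) ∨ (σ^[k] a = σ a ∧ σ^[k + 1] a = a) := by
    intro a ha k
    induction k with
    | zero => exact Or.inl ⟨rfl, rfl⟩
    | succ k ih =>
      rcases ih with ⟨h1, h2⟩ | ⟨h1, h2⟩
      · exact Or.inr ⟨h2, by rw [Function.iterate_succ_apply', h2, pair_invol a ha]⟩
      · exact Or.inl ⟨h2, by rw [Function.iterate_succ_apply', h2]⟩
  have pairs_eq : ∀ a, Pr a → ∀ k, s(σ^[k] a, σ^[k + 1] a) = s(a, σ a) := by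
    intro a ha k
    rcases alternate a ha k with ⟨h1, h2⟩ | ⟨h1, h2⟩
    · rw [h1, h2]
    · rw [h1, h2, Sym2.eq_swap]
  have general : ∀ (x : ι) k m, k ≤ m → Pr (σ^[k] x) →
      s(σ^[m] x, σ^[m + 1] x) = s(σ^[k] x, σ^[k + 1] x) := by
    intro x k m hkm hp
    obtain ⟨j, rfl⟩ := Nat.exists_eq_add_of_le hkm
    have e1 : σ^[k + j] x = σ^[j] (σ^[k] x) := by
      rw [Nat.add_comm, Function.iterate_add_apply]
    have e2 : σ^[k + j + 1] x = σ^[j + 1] (σ^[k] x) := by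
      rw [show k + j + 1 = (j + 1) + k by omega, Function.iterate_add_apply]
    rw [e1, e2, pairs_eq _ hp j, Function.iterate_succ_apply']
  have destEq : ∀ (x : ι) k m, Pr (σ^[k] x) → Pr (σ^[m] x) →
      s(σ^[k] x, σ^[k + 1] x) = s(σ^[m] x, σ^[m + 1] x) := by
    intro x k m hk hm
    rcases le_total k m with h | h
    · exact (general x k m h hk).symm
    · exact general x m k h hm
  have mono : ∀ (x : ι) k m, k ≤ m → w (mwoe (σ^[m] x)) ≤ w (mwoe (σ^[k] x)) := by
    intro x k m hkm
    induction m, hkm using Nat.le_induction with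
    | base => exact le_refl _
    | succ n hn ih =>
      refine le_trans ?_ ih
      rw [Function.iterate_succ_apply']
      exact hdec _
  have exPair : ∀ x : ι, ∃ k, Pr (σ^[k] x) := by
    intro x
    have aux : ∀ i j : ℕ, i < j → σ^[i] x = σ^[j] x → ∃ k, Pr (σ^[k] x) := by
      intro i j hij heq
      have h1 : w (mwoe (σ^[i + 1] x)) ≤ w (mwoe (σ^[i] x)) := mono x i (i + 1) (by omega)
      have h2 : w (mwoe (σ^[j] x)) ≤ w (mwoe (σ^[i + 1] x)) := mono x (i + 1) j (by omega)
      have h3 : w (mwoe (σ^[i + 1] x)) = w (mwoe (σ^[i] x)) :=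
        le_antisymm h1 (by rw [heq]; exact h2)
      rw [Function.iterate_succ_apply'] at h3
      exact ⟨i, hEeq _ h3⟩
    obtain ⟨i, j, hij, heq⟩ := Finite.exists_ne_map_eq_of_infinite (fun k : ℕ => σ^[k] x)
    rcases hij.lt_or_gt with h | h
    · exact aux i j h heq
    · exact aux j i h heq.symm
  choose K hK using exPair
  have adjConst : ∀ x y, (fragGraph P mwoe).Adj x y → ∀ k m, Pr (σ^[k] x) → Pr (σ^[m] y) →
      s(σ^[k] x, σ^[k + 1] x) = s(σ^[m] y, σ^[m + 1] y) := by
    have base : ∀ (x : ι) k m, Pr (σ^[k] x) → Pr (σ^[m] (σ x)) →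
        s(σ^[k] x, σ^[k + 1] x) = s(σ^[m] (σ x), σ^[m + 1] (σ x)) := by
      intro x k m hk hm
      have e1 : σ^[m] (σ x) = σ^[m + 1] x := (Function.iterate_succ_apply σ m x).symm
      have e2 : σ^[m + 1] (σ x) = σ^[m + 1 + 1] x := (Function.iterate_succ_apply σ (m + 1) x).symm
      rw [e1, e2]
      exact destEq x k (m + 1) hk (by rwa [e1] at hm)
    intro x y hxy k m hk hm
    rcases hadj_cases x y hxy with h | h
    · subst h; exact base x k m hk hm
    · subst h; exact (base y m k hm hk).symm
  have walkConst : ∀ (x y : ι) (p : (fragGraph P mwoe).Walk x y) (k m : ℕ),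
      Pr (σ^[k] x) → Pr (σ^[m] y) →
      s(σ^[k] x, σ^[k + 1] x) = s(σ^[m] y, σ^[m + 1] y) := by
    intro x y p
    induction p with
    | nil => intro k m hk hm; exact destEq _ k m hk hm
    | @cons x z y h p ih =>
      intro k m hk hm
      exact (adjConst x z h k (K z) hk (hK z)).trans (ih (K z) m (hK z) hm)
  have reach_iter : ∀ (x : ι) (k : ℕ), (fragGraph P mwoe).Reachable x (σ^[k] x) := by
    intro x k
    induction k with
    | zero => exact SimpleGraph.Reachable.refl x
    | succ k ih =>
      refine ih.trans ?_
      rw [Function.iterate_succ_apply']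
      exact (hadj _).reachable
  constructor
  · -- acyclicity
    intro v c hc
    obtain ⟨M, hMs, hMmax⟩ := Finset.exists_max_image c.support.toFinset
      (fun x => w (mwoe x)) ⟨v, List.mem_toFinset.mpr c.start_mem_support⟩
    rw [List.mem_toFinset] at hMs
    have hc' := hc.rotate hMs
    set c' := c.rotate M hMs with hc'def
    have hsup : ∀ x, x ∈ c'.support → x ∈ c.support := by
      intro x hx
      have h1 : x ∈ c'.toSubgraph.verts := (SimpleGraph.Walk.mem_verts_toSubgraph c').mpr hx
      rw [hc'def, SimpleGraph.Walk.toSubgraph_rotate] at h1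
      exact (SimpleGraph.Walk.mem_verts_toSubgraph c).mp h1
    have hmax : ∀ x, x ∈ c'.support → w (mwoe x) ≤ w (mwoe M) :=
      fun x hx => hMmax x (List.mem_toFinset.mpr (hsup x hx))
    have hforce : ∀ x, (fragGraph P mwoe).Adj M x → x ∈ c'.support → x = σ M := by
      intro x hMx hxs
      rcases hadj_cases M x hMx with h | h
      · exact h
      · have h1 : w (mwoe M) ≤ w (mwoe x) := by
          have := hdec x; rwa [← h] at this
        have h2 : w (mwoe M) = w (mwoe x) := le_antisymm h1 (hmax x hxs)
        have h3 : mwoe (σ x) = mwoe x := hEeq x (by rw [← h]; exact h2)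
        rw [← h] at h3
        exact hpair_succ M x h3.symm hMx.ne'
    have hnn : ¬ c'.Nil := hc'.not_nil
    obtain ⟨b, hMb, q, hq⟩ := SimpleGraph.Walk.not_nil_iff.mp hnn
    have hcons : (SimpleGraph.Walk.cons hMb q).IsCycle := hq ▸ hc'
    have hql : 2 ≤ q.length := by
      have h3 := hcons.three_le_length
      rw [SimpleGraph.Walk.length_cons] at h3
      omega
    have hqp : q.IsPath := ((SimpleGraph.Walk.cons_isCycle_iff q hMb).mp hcons).1
    have hbs : b ∈ c'.support := by
      rw [hq, SimpleGraph.Walk.support_cons]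
      exact List.mem_cons_of_mem _ q.start_mem_support
    have hqr : ¬ q.reverse.Nil := by
      rw [SimpleGraph.Walk.nil_iff_length_eq, SimpleGraph.Walk.length_reverse]
      omega
    obtain ⟨d, hMd, r, hr⟩ := SimpleGraph.Walk.not_nil_iff.mp hqr
    have hds : d ∈ c'.support := by
      have hd1 : d ∈ q.reverse.support := by
        rw [hr, SimpleGraph.Walk.support_cons]
        exact List.mem_cons_of_mem _ r.start_mem_support
      rw [SimpleGraph.Walk.support_reverse, List.mem_reverse] at hd1
      rw [hq, SimpleGraph.Walk.support_cons]
      exact List.mem_cons_of_mem _ hd1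
    have hbd : b ≠ d := by
      intro hbd
      subst hbd
      have hrp : r.IsPath := by
        have hrev := hqp.reverse
        rw [hr] at hrev
        exact hrev.of_cons
      have hrnil : r = SimpleGraph.Walk.nil :=
        congrArg Subtype.val (SimpleGraph.Path.loop_eq ⟨r, hrp⟩)
      have hlen : q.reverse.length = 1 := by
        rw [hr, hrnil]
        simp
      rw [SimpleGraph.Walk.length_reverse] at hlen
      omega
    exact hbd ((hforce b hMb hbs).trans (hforce d hMd hds).symm)
  · -- unique coinciding pair per component
    intro i
    refine ⟨s(σ^[K i] i, σ (σ^[K i] i)),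
      ⟨σ^[K i] i, σ (σ^[K i] i), rfl, (hne _).symm, reach_iter i (K i), (hK i).symm⟩, ?_⟩
    rintro pr' ⟨a', b', rfl, hab, hreach, hE⟩
    have hb' : b' = σ a' := hpair_succ a' b' hE.symm hab.symm
    have hPa' : Pr a' := by show mwoe (σ a') = mwoe a'; rw [← hb']; exact hE.symm
    obtain ⟨p⟩ := hreach.symm.trans (reach_iter i (K i))
    have hw := walkConst a' (σ^[K i] i) p 0 0 hPa' (hK i)
    simp only [Function.iterate_zero_apply, Function.iterate_one] at hw
    rw [hb']
    exact hw
end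

section
/- Merging the fragments of each connected component of the fragment graph along MWOE edges again yields an MST forest: each merged component, together with the MWOE edges used, is a connected subtree of the MST, and the merged components are vertex-disjoint and cover V. -/
variable {V : Type*}

section AuxLemmas
open SimpleGraph

lemma reachable_of_forall_adj {G H : SimpleGraph V} (h : ∀ c d, G.Adj c d → H.Reachable c d)
    {x y : V} (hxy : G.Reachable x y) : H.Reachable x y := by
  obtain ⟨p⟩ := hxy
  induction p with
  | nil => exact Reachable.refl _
  | cons ha _ ih => exact (h _ _ ha).trans ih

lemma exists_le_isTree_aux [Fintype V] :
    ∀ (n : ℕ) (G : SimpleGraph V), G.edgeSet.toFinite.toFinset.card ≤ n → G.Connected →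
      ∃ T ≤ G, T.Connected ∧ T.IsAcyclic := by
  intro n
  induction n with
  | zero =>
    intro G hcard hG
    refine ⟨G, le_rfl, hG, ?_⟩
    intro v c hc
    cases c with
    | nil => exact hc.ne_nil rfl
    | @cons _ x _ ha c' =>
      have hm : s(v, x) ∈ G.edgeSet.toFinite.toFinset := by
        rw [Set.Finite.mem_toFinset]
        exact ha
      have := Finset.card_pos.mpr ⟨_, hm⟩
      omega
  | succ n ih =>
    intro G hcard hG
    by_cases hac : G.IsAcyclic
    · exact ⟨G, le_rfl, hG, hac⟩
    rw [isAcyclic_iff_forall_edge_isBridge] at hac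
    push_neg at hac
    obtain ⟨e, he, hbe⟩ := hac
    revert he hbe
    induction e using Sym2.ind with
    | _ x y =>
    intro he hbe
    have hadj : G.Adj x y := he
    have hreach : (G \ fromEdgeSet {s(x, y)}).Reachable x y := by
      by_contra hnr
      exact hbe hnr
    set G₂ := G \ fromEdgeSet {s(x, y)} with hG₂
    have hle : G₂ ≤ G := sdiff_le
    have hadj₂ : ∀ c d, G.Adj c d → s(c, d) ≠ s(x, y) → G₂.Adj c d := by
      intro c d hcd hne
      rw [hG₂, sdiff_adj, fromEdgeSet_adj]
      exact ⟨hcd, fun h => hne h.1⟩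
    have hG₂conn : G₂.Connected := by
      haveI : Nonempty V := hG.nonempty
      refine ⟨fun a b => reachable_of_forall_adj ?_ (hG.preconnected a b)⟩
      intro c d hcd
      by_cases hne : s(c, d) = s(x, y)
      · rw [Sym2.eq_iff] at hne
        rcases hne with ⟨rfl, rfl⟩ | ⟨rfl, rfl⟩
        · exact hreach
        · exact hreach.symm
      · exact (hadj₂ c d hcd hne).reachable
    have hsub : G₂.edgeSet.toFinite.toFinset ⊂ G.edgeSet.toFinite.toFinset := by
      refine Finset.ssubset_iff_of_subset (Set.Finite.toFinset_mono (edgeSet_mono hle)) |>.mpr ?_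
      refine ⟨s(x, y), ?_, ?_⟩
      · simpa [Set.Finite.mem_toFinset] using he
      · simp only [Set.Finite.mem_toFinset, hG₂, edgeSet_sdiff, Set.mem_diff, not_and, not_not]
        intro _
        rw [edgeSet_fromEdgeSet]
        exact ⟨rfl, by simp [hadj.ne]⟩
    obtain ⟨T, hT, hc, ha⟩ := ih G₂ (by have := Finset.card_lt_card hsub; omega) hG₂conn
    exact ⟨T, hT.trans hle, hc, ha⟩

lemma exists_le_isTree [Fintype V] (G : SimpleGraph V) (hG : G.Connected) :
    ∃ T ≤ G, T.Connected ∧ T.IsAcyclic :=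
  exists_le_isTree_aux _ G le_rfl hG

lemma exists_cross_edge {T : SimpleGraph V} {S : Set V} {u v : V} (p : T.Walk u v) :
    u ∈ S → v ∉ S →
      ∃ (a b : V) (q : T.Walk u a) (r : T.Walk b v),
        T.Adj a b ∧ a ∈ S ∧ b ∉ S ∧ p.edges = q.edges ++ s(a, b) :: r.edges := by
  induction p with
  | nil => intro hu hv; exact absurd hu hv
  | @cons u x v h p' ih =>
    intro hu hv
    by_cases hx : x ∈ S
    · obtain ⟨a, b, q, r, hab, ha, hb, he⟩ := ih hx hv
      exact ⟨a, b, Walk.cons h q, r, hab, ha, hb, by simp [he]⟩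
    · exact ⟨u, x, Walk.nil, p', h, hu, hx, by simp⟩

noncomputable def eFin [Fintype V] (G : SimpleGraph V) : Finset (Sym2 V) :=
  G.edgeSet.toFinite.toFinset

lemma treeWeight_eq_sum [Fintype V] [DecidableEq V] (w : Sym2 V → ℝ) (H : SimpleGraph V) :
    treeWeight w H = ∑ e ∈ eFin H, w e := by
  rw [treeWeight]
  apply Finset.sum_congr _ (fun _ _ => rfl)
  ext e
  simp [eFin, Set.Finite.mem_toFinset]

lemma card_eFin_tree [Fintype V] {T : SimpleGraph V} (hT : T.IsTree) :
    (eFin T).card + 1 = Fintype.card V := by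
  letI : Fintype T.edgeSet := T.edgeSet.toFinite.fintype
  have h := hT.card_edgeFinset
  have : eFin T = T.edgeFinset := by
    ext e; simp [eFin, Set.Finite.mem_toFinset, mem_edgeFinset]
  rwa [this]

lemma mwoe_mem_tree [Fintype V] [DecidableEq V] {G : SimpleGraph V} {w : Sym2 V → ℝ}
    (hinj : Set.InjOn w G.edgeSet) {T : SimpleGraph V} (hT : IsMST G w T)
    {S : Set V} {e : Sym2 V} (he : IsMWOE G w S e) : e ∈ T.edgeSet := by
  obtain ⟨⟨hTG, hTc, hTa⟩, hmin⟩ := hT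
  obtain ⟨heG, hecross, hemin⟩ := he
  obtain ⟨u, v, rfl, hu, hv⟩ := hecross
  by_contra heT
  have huv : G.Adj u v := heG
  obtain ⟨p0⟩ := hTc.preconnected u v
  obtain ⟨a, b, q, r, hab, ha, hb, hedges⟩ := exists_cross_edge (p0.toPath : T.Walk u v) hu hv
  have hnodup : (p0.toPath : T.Walk u v).edges.Nodup := (p0.toPath.2).isTrail.edges_nodup
  rw [hedges] at hnodup
  have hq : s(a, b) ∉ q.edges := by
    have := List.disjoint_of_nodup_append hnodup
    exact fun h => this h (by simp)
  have hr : s(a, b) ∉ r.edges := by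
    have := (List.nodup_append.mp hnodup).2.1
    exact (List.nodup_cons.mp this).1
  have hfT : s(a, b) ∈ T.edgeSet := hab
  have hfG : s(a, b) ∈ G.edgeSet := edgeSet_mono hTG hfT
  have hne : s(u, v) ≠ s(a, b) := fun h => heT (h ▸ hfT)
  have hwlt : w s(u, v) < w s(a, b) :=
    (hemin _ hfG ⟨a, b, rfl, ha, hb⟩).lt_of_ne (fun h => hne (hinj heG hfG h))
  set f : Sym2 V := s(a, b) with hfdef
  set T' : SimpleGraph V := T.deleteEdges {f} ⊔ fromEdgeSet {s(u, v)} with hT'def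
  have hT'G : T' ≤ G := by
    refine sup_le ((deleteEdges_le _).trans hTG) ?_
    intro x y hxy
    rw [fromEdgeSet_adj] at hxy
    obtain ⟨hm, _⟩ := hxy
    rw [Set.mem_singleton_iff] at hm
    rw [← mem_edgeSet, hm]
    exact heG
  have hreach_ua : T'.Reachable u a :=
    Reachable.mono le_sup_left
      ⟨q.toDeleteEdges {f} (fun e' he' hm => hq (Set.mem_singleton_iff.mp hm ▸ he'))⟩
  have hreach_bv : T'.Reachable b v :=
    Reachable.mono le_sup_left
      ⟨r.toDeleteEdges {f} (fun e' he' hm => hr (Set.mem_singleton_iff.mp hm ▸ he'))⟩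
  have hadjuv : T'.Adj u v := (le_sup_right : fromEdgeSet {s(u,v)} ≤ T') ((fromEdgeSet_adj _).mpr ⟨rfl, huv.ne⟩)
  have hreach_ab : T'.Reachable a b :=
    hreach_ua.symm.trans (hadjuv.reachable.trans hreach_bv.symm)
  have hT'c : T'.Connected := by
    haveI : Nonempty V := hTc.nonempty
    refine ⟨fun x y => reachable_of_forall_adj ?_ (hTc.preconnected x y)⟩
    intro c d hcd
    by_cases h : s(c, d) = f
    · rw [hfdef, Sym2.eq_iff] at h
      rcases h with ⟨rfl, rfl⟩ | ⟨rfl, rfl⟩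
      · exact hreach_ab
      · exact hreach_ab.symm
    · exact Adj.reachable ((le_sup_left : T.deleteEdges {f} ≤ T') (deleteEdges_adj.mpr ⟨hcd, by simpa using h⟩))
  obtain ⟨T'', hT''le, hT''c, hT''a⟩ := exists_le_isTree T' hT'c
  have hw : treeWeight w T ≤ treeWeight w T'' := hmin T'' ⟨hT''le.trans hT'G, hT''c, hT''a⟩
  -- finset facts
  have hBset : T'.edgeSet = (T.edgeSet \ {f}) ∪ {s(u, v)} := by
    rw [hT'def, edgeSet_sup, edgeSet_deleteEdges, edgeSet_fromEdgeSet]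
    have : ({s(u, v)} : Set (Sym2 V)) \ {e | e.IsDiag} = {s(u, v)} := by
      ext e'
      simp only [Set.mem_diff, Set.mem_singleton_iff, Set.mem_setOf_eq, and_iff_left_iff_imp]
      rintro rfl
      simp [huv.ne]
    exact congrArg _ this
  have hfmem : f ∈ eFin T := by rw [eFin, Set.Finite.mem_toFinset]; exact hfT
  have huvmem : s(u, v) ∉ eFin T := by rw [eFin, Set.Finite.mem_toFinset]; exact heT
  have hB : eFin T' = insert s(u, v) ((eFin T).erase f) := by
    ext e'
    simp only [eFin, Set.Finite.mem_toFinset, hBset, Set.mem_union, Set.mem_diff,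
      Set.mem_singleton_iff, Finset.mem_insert, Finset.mem_erase]
    tauto
  have hcardT' : (eFin T').card = (eFin T).card := by
    rw [hB, Finset.card_insert_of_notMem (fun h => huvmem (Finset.mem_of_mem_erase h)),
      Finset.card_erase_of_mem hfmem]
    have := Finset.card_pos.mpr ⟨f, hfmem⟩
    omega
  have hcT : (eFin T).card + 1 = Fintype.card V := card_eFin_tree ⟨hTc, hTa⟩
  have hcT'' : (eFin T'').card + 1 = Fintype.card V := card_eFin_tree ⟨hT''c, hT''a⟩
  have hsub : eFin T'' ⊆ eFin T' := Set.Finite.toFinset_mono (edgeSet_mono hT''le)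
  have hEq : eFin T'' = eFin T' :=
    Finset.eq_of_subset_of_card_le hsub (by omega)
  have hsum : treeWeight w T'' = w s(u, v) + (treeWeight w T - w f) := by
    rw [treeWeight_eq_sum, treeWeight_eq_sum, hEq, hB,
      Finset.sum_insert (fun h => huvmem (Finset.mem_of_mem_erase h))]
    have := Finset.add_sum_erase (eFin T) w hfmem
    linarith
  rw [hsum] at hw
  linarith

lemma merged_walk {ι : Type*} {T : SimpleGraph V} {P : ι → Set V} {mwoe : ι → Sym2 V}
    (hP : ∀ i, ConnectedIn T (P i)) (hTe : ∀ i, mwoe i ∈ T.edgeSet) {i j : ι}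
    (W : (fragGraph P mwoe).Walk i j) :
    ∀ u ∈ P i, ∀ v ∈ P j, ∃ p : T.Walk u v, ∀ x ∈ p.support, ∃ k ∈ W.support, x ∈ P k := by
  induction W with
  | nil =>
    intro u hu v hv
    obtain ⟨p, hp⟩ := (hP _).2 u hu v hv
    exact ⟨p, fun x hx => ⟨_, by simp, hp x hx⟩⟩
  | @cons i m j hadj W' ih =>
    intro u hu v hv
    have hxy : ∃ x y, x ∈ P i ∧ y ∈ P m ∧ T.Adj x y := by
      rw [fragGraph, fromRel_adj] at hadj
      obtain ⟨hne, h⟩ := hadj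
      have h2 : connectsFrag P (mwoe i) i m ∨ connectsFrag P (mwoe m) m i := by tauto
      rcases h2 with ⟨x, y, hxy, hx, hy⟩ | ⟨x, y, hxy, hx, hy⟩
      · exact ⟨x, y, hx, hy, (mem_edgeSet _).mp (hxy ▸ hTe i)⟩
      · exact ⟨y, x, hy, hx, ((mem_edgeSet _).mp (hxy ▸ hTe m)).symm⟩
    obtain ⟨x, y, hx, hy, hadjT⟩ := hxy
    obtain ⟨q, hq⟩ := (hP i).2 u hu x hx
    obtain ⟨r, hr⟩ := ih y hy v hv
    refine ⟨q.append (Walk.cons hadjT r), ?_⟩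
    intro z hz
    rw [Walk.mem_support_append_iff] at hz
    rcases hz with hz | hz
    · exact ⟨i, by simp, hq z hz⟩
    · rw [Walk.support_cons, List.mem_cons] at hz
      rcases hz with rfl | hz
      · exact ⟨i, by simp, hx⟩
      · obtain ⟨k, hk, hzk⟩ := hr z hz
        exact ⟨k, by simp [Walk.support_cons, List.mem_cons]; tauto, hzk⟩

end AuxLemmas

/-- Merging the fragments of each connected component of the fragment graph along
MWOE edges again yields an MST forest: each MWOE is an edge of the MST `T`, and the
merged components (unions of the fragments in one component, connected via the MWOE
edges of `T`) are nonempty connected subtrees of `T`, vertex-disjoint, covering `V`. -/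
theorem stmt5 {ι : Type*} [Fintype V] [DecidableEq V] [Fintype ι]
    (G : SimpleGraph V) (w : Sym2 V → ℝ)
    (hconn : G.Connected) (hinj : Set.InjOn w G.edgeSet)
    (T : SimpleGraph V) (hT : IsMST G w T)
    (P : ι → Set V) (hforest : IsMSTForestFam T P)
    (hcard : 2 ≤ Fintype.card ι)
    (mwoe : ι → Sym2 V) (hmwoe : ∀ i, IsMWOE G w (P i) (mwoe i)) :
    (∀ i, mwoe i ∈ T.edgeSet) ∧
      IsMSTForestFam T (fun c : (fragGraph P mwoe).ConnectedComponent =>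
        ⋃ i ∈ {i : ι | (fragGraph P mwoe).connectedComponentMk i = c}, P i) := by
  classical
  obtain ⟨hPconn, hPdisj, hPcover⟩ := hforest
  have hTe : ∀ i, mwoe i ∈ T.edgeSet := fun i => mwoe_mem_tree hinj hT (hmwoe i)
  refine ⟨hTe, ?_, ?_, ?_⟩
  · intro c
    induction c using SimpleGraph.ConnectedComponent.ind with
    | _ i =>
    refine ⟨?_, ?_⟩
    · obtain ⟨u, hu⟩ := (hPconn i).1
      exact ⟨u, Set.mem_biUnion (show i ∈ {i' | (fragGraph P mwoe).connectedComponentMk i' =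
        (fragGraph P mwoe).connectedComponentMk i} from rfl) hu⟩
    · intro u hu v hv
      simp only [Set.mem_iUnion, Set.mem_setOf_eq, exists_prop] at hu hv
      obtain ⟨i₁, hi₁, hu⟩ := hu
      obtain ⟨j₁, hj₁, hv⟩ := hv
      obtain ⟨W⟩ := SimpleGraph.ConnectedComponent.exact (hi₁.trans hj₁.symm)
      obtain ⟨p, hp⟩ := merged_walk hPconn hTe W u hu v hv
      refine ⟨p, fun x hx => ?_⟩
      obtain ⟨k, hk, hxk⟩ := hp x hx
      have hreach : (fragGraph P mwoe).Reachable i₁ k := ⟨W.takeUntil k hk⟩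
      refine Set.mem_biUnion ?_ hxk
      show (fragGraph P mwoe).connectedComponentMk k = _
      rw [← SimpleGraph.ConnectedComponent.sound hreach, hi₁]
  · intro c c' hne
    rw [Function.onFun]
    rw [Set.disjoint_left]
    intro x hx hx'
    simp only [Set.mem_iUnion, Set.mem_setOf_eq, exists_prop] at hx hx'
    obtain ⟨i, hi, hxi⟩ := hx
    obtain ⟨j, hj, hxj⟩ := hx'
    by_cases hij : i = j
    · exact hne (hi ▸ hij ▸ hj ▸ rfl)
    · exact Set.disjoint_left.mp (hPdisj hij) hxi hxj
  · ext x
    simp only [Set.mem_iUnion, Set.mem_setOf_eq, Set.mem_univ, iff_true, exists_prop]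
    have : x ∈ ⋃ i, P i := hPcover ▸ Set.mem_univ x
    obtain ⟨i, hxi⟩ := Set.mem_iUnion.mp this
    exact ⟨(fragGraph P mwoe).connectedComponentMk i, i, rfl, hxi⟩
end
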